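/- Let S and A be finite sets, H a positive integer, d a positive integer, and fix 0 ≤ i ≤ H−1. Let ρ : S → ℝ be nonnegative, let P : S × S × A → ℝ be nonnegative with Σ_{s'∈S} P(s',s,a) = 1 for all s,a, and let π : ℝ^d × S × A → ℝ be differentiable in θ, strictly positive, with Σ_{a∈A} π(θ,s,a) = 1 for all θ,s. For a trajectory τ = (s_0,a_0,…,s_{H-1},a_{H-1},s_H) set f(θ,τ) = ρ(s_0)·Π_{j=0}^{H-1} π(θ,s_j,a_j)·P(s_{j+1},s_j,a_j). Let h be any real-valued function of the prefix (s_0,a_0,…,a_{i-1},s_i) (i.e. h(τ) depends only on s_0,a_0,…,a_{i-1},s_i). Then Σ_τ f(θ,τ)·h(τ)·∇_θ log π(θ,s_i,a_i) = 0, where the sum ranges over all trajectories. -/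

import Mathlib

/-!
Summing out the last transition `(a_{H-1}, s_H)` of a trajectory multiplies its probability by
`∑ₐ π(θ,s,a) ∑_{s'} P(s',s,a) = 1`, so by induction on the horizon the sum reduces to horizon
`i + 1`. There `h` no longer depends on the last transition, and summing out `aᵢ` produces the
factor `∑ₐ π(θ,s,a) ∇ log π(θ,s,a) = ∇ ∑ₐ π(θ,s,a) = ∇ 1 = 0`.
-/

/-- The probability of a trajectory `τ = (s, a)` over horizon `H` under policy
parameters `θ`: `f(θ,τ) = ρ(s₀) · ∏ⱼ π(θ,sⱼ,aⱼ) · ∏ⱼ P(sⱼ₊₁,sⱼ,aⱼ)`. -/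
noncomputable def trajProb {S A : Type*} {d H : ℕ}
    (ρ : S → ℝ) (P : S → S → A → ℝ)
    (π : EuclideanSpace ℝ (Fin d) → S → A → ℝ)
    (θ : EuclideanSpace ℝ (Fin d))
    (τ : (Fin (H + 1) → S) × (Fin H → A)) : ℝ :=
  ρ (τ.1 0) * (∏ j : Fin H, π θ (τ.1 j.castSucc) (τ.2 j))
    * ∏ j : Fin H, P (τ.1 j.succ) (τ.1 j.castSucc) (τ.2 j)

theorem gradient_log_eq_inv_smul {E : Type*} [NormedAddCommGroup E] [InnerProductSpace ℝ E]
    [CompleteSpace E] {f : E → ℝ} {x : E} (hf : DifferentiableAt ℝ f x) (hx : f x ≠ 0) :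
    gradient (fun y => Real.log (f y)) x = (f x)⁻¹ • gradient f x := by
  simp only [gradient, fderiv.log hf hx, map_smul]

theorem sum_smul_gradient_log_eq_zero {E ι : Type*} [NormedAddCommGroup E]
    [InnerProductSpace ℝ E] [CompleteSpace E] [Fintype ι] {p : E → ι → ℝ} {x : E}
    (hdiff : ∀ a, DifferentiableAt ℝ (p · a) x) (hne : ∀ a, p x a ≠ 0)
    (hsum : ∀ y, ∑ a, p y a = 1) :
    ∑ a, p x a • gradient (fun y => Real.log (p y a)) x = 0 := by
  have hconst : (fun y => ∑ a, p y a) = fun _ => 1 := funext hsum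
  calc ∑ a, p x a • gradient (fun y => Real.log (p y a)) x
      = ∑ a, gradient (p · a) x := by
        refine Finset.sum_congr rfl fun a _ => ?_
        rw [gradient_log_eq_inv_smul (hdiff a) (hne a), smul_inv_smul₀ (hne a)]
    _ = gradient (fun y => ∑ a, p y a) x := by
        simp only [gradient, ← map_sum, fderiv_fun_sum fun a _ => hdiff a]
    _ = 0 := by rw [hconst, gradient_fun_const]

abbrev Trajectory (S A : Type*) (H : ℕ) := (Fin (H + 1) → S) × (Fin H → A)

namespace Trajectory

variable {S A : Type*} {H : ℕ}

def snoc (τ : Trajectory S A H) (a : A) (s : S) : Trajectory S A (H + 1) :=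
  (Fin.snoc τ.1 s, Fin.snoc τ.2 a)

def snocEquiv : Trajectory S A H × A × S ≃ Trajectory S A (H + 1) where
  toFun p := p.1.snoc p.2.1 p.2.2
  invFun τ := ((Fin.init τ.1, Fin.init τ.2), τ.2 (Fin.last H), τ.1 (Fin.last (H + 1)))
  left_inv := by rintro ⟨⟨s, a⟩, a', s'⟩; simp [snoc]
  right_inv := by rintro ⟨s, a⟩; simp [snoc]

theorem sum_eq_sum_snoc [Fintype S] [Fintype A] {M : Type*} [AddCommMonoid M]
    (F : Trajectory S A (H + 1) → M) :
    ∑ τ, F τ = ∑ σ : Trajectory S A H, ∑ a, ∑ s, F (σ.snoc a s) := by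
  rw [← snocEquiv.sum_comp]
  simp only [Fintype.sum_prod_type]
  rfl

@[simp] theorem snoc_fst_castSucc (τ : Trajectory S A H) (a : A) (s : S) (j : Fin (H + 1)) :
    (τ.snoc a s).1 j.castSucc = τ.1 j := by
  simp [snoc]

@[simp] theorem snoc_snd_castSucc (τ : Trajectory S A H) (a : A) (s : S) (j : Fin H) :
    (τ.snoc a s).2 j.castSucc = τ.2 j := by
  simp [snoc]

@[simp] theorem snoc_snd_last (τ : Trajectory S A H) (a : A) (s : S) :
    (τ.snoc a s).2 (Fin.last H) = a := by
  simp [snoc]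

/-- `τ` and `τ'` share the prefix `(s₀, a₀, …, a_{k-1}, s_k)`. -/
def EqOnPrefix (k : ℕ) (τ τ' : Trajectory S A H) : Prop :=
  (∀ j : Fin (H + 1), j.val ≤ k → τ.1 j = τ'.1 j) ∧ (∀ j : Fin H, j.val < k → τ.2 j = τ'.2 j)

def DependsOnPrefix {β : Type*} (k : ℕ) (f : Trajectory S A H → β) : Prop :=
  ∀ τ τ', EqOnPrefix k τ τ' → f τ = f τ'

theorem EqOnPrefix.snoc {k : ℕ} (hk : k ≤ H) {σ σ' : Trajectory S A H} (hσ : EqOnPrefix k σ σ')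
    (a a' : A) (s s' : S) : EqOnPrefix k (σ.snoc a s) (σ'.snoc a' s') := by
  constructor
  · intro j hj
    induction j using Fin.lastCases with
    | last => rw [Fin.val_last] at hj; omega
    | cast j => simpa [Trajectory.snoc] using hσ.1 j hj
  · intro j hj
    induction j using Fin.lastCases with
    | last => rw [Fin.val_last] at hj; omega
    | cast j => simpa [Trajectory.snoc] using hσ.2 j hj

theorem DependsOnPrefix.apply_snoc_eq {β : Type*} {k : ℕ} {f : Trajectory S A (H + 1) → β}
    (hf : DependsOnPrefix k f) (hk : k ≤ H) (σ σ' : Trajectory S A H) (hσ : EqOnPrefix k σ σ')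
    (a a' : A) (s s' : S) : f (σ.snoc a s) = f (σ'.snoc a' s') :=
  hf _ _ (hσ.snoc hk a a' s s')

end Trajectory

open Trajectory

section

variable {S A : Type*} {d : ℕ} (ρ : S → ℝ) (P : S → S → A → ℝ)
  (π : EuclideanSpace ℝ (Fin d) → S → A → ℝ) (θ : EuclideanSpace ℝ (Fin d))

theorem trajProb_snoc {H : ℕ} (σ : Trajectory S A H) (a : A) (s : S) :
    trajProb ρ P π θ (σ.snoc a s)
      = trajProb ρ P π θ σ * (π θ (σ.1 (Fin.last H)) a * P s (σ.1 (Fin.last H)) a) := by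
  simp only [trajProb, Trajectory.snoc, Fin.prod_univ_castSucc, Fin.succ_castSucc,
    Fin.snoc_castSucc, Fin.snoc_last, Fin.succ_last]
  rw [← Fin.castSucc_zero', Fin.snoc_castSucc]
  ring

variable [Fintype S] [Fintype A] {M : Type*} [AddCommGroup M] [Module ℝ M]

theorem sum_trajProb_smul_eq_sum_snoc {H : ℕ} (F : Trajectory S A (H + 1) → M) :
    ∑ τ, trajProb ρ P π θ τ • F τ = ∑ σ : Trajectory S A H, trajProb ρ P π θ σ •
      ∑ a, π θ (σ.1 (Fin.last H)) a • ∑ s, P s (σ.1 (Fin.last H)) a • F (σ.snoc a s) := by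
  rw [sum_eq_sum_snoc]
  simp only [trajProb_snoc, mul_smul, Finset.smul_sum]

theorem sum_trajProb_mul_smul_eq_zero [Nonempty S] [Nonempty A]
    (hPsum : ∀ s a, ∑ s', P s' s a = 1) (hsum : ∀ s, ∑ a, π θ s a = 1)
    {g : S → A → M} (hg : ∀ s, ∑ a, π θ s a • g s a = 0) {H : ℕ} (i : Fin H)
    (h : Trajectory S A H → ℝ) (hh : DependsOnPrefix i h) :
    ∑ τ, (trajProb ρ P π θ τ * h τ) • g (τ.1 i.castSucc) (τ.2 i) = 0 := by
  induction H with
  | zero => exact i.elim0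
  | succ H ih =>
    set c : Trajectory S A H → ℝ :=
      fun σ => h (σ.snoc (Classical.arbitrary A) (Classical.arbitrary S))
    have hc : ∀ σ a s, h (σ.snoc a s) = c σ := fun σ a s =>
      hh.apply_snoc_eq (Nat.le_of_lt_succ i.isLt) σ σ ⟨fun _ _ => rfl, fun _ _ => rfl⟩ _ _ _ _
    simp_rw [mul_smul, sum_trajProb_smul_eq_sum_snoc, hc]
    induction i using Fin.lastCases with
    | last =>
      simp only [snoc_fst_castSucc, snoc_snd_last, ← Finset.sum_smul, hPsum, one_smul,
        smul_comm (π θ _ _) (c _), ← Finset.smul_sum, hg, smul_zero, Finset.sum_const_zero]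
    | cast i =>
      simp only [snoc_fst_castSucc, snoc_snd_castSucc, ← Finset.sum_smul, hPsum, hsum, one_smul]
      simp only [← mul_smul]
      exact ih i c fun σ σ' hσ => hh.apply_snoc_eq i.castSucc_lt_last.le σ σ' hσ _ _ _ _

end

theorem stmt_5_general {S A : Type*} [Fintype S] [Fintype A] {H d : ℕ}
    (i : Fin H)
    (ρ : S → ℝ)
    (P : S → S → A → ℝ)
    (hPsum : ∀ (s : S) (a : A), ∑ s' : S, P s' s a = 1)
    (π : EuclideanSpace ℝ (Fin d) → S → A → ℝ)
    (hdiff : ∀ (s : S) (a : A), Differentiable ℝ (fun θ => π θ s a))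
    (hpos : ∀ (θ : EuclideanSpace ℝ (Fin d)) (s : S) (a : A), 0 < π θ s a)
    (hsum : ∀ (θ : EuclideanSpace ℝ (Fin d)) (s : S), ∑ a : A, π θ s a = 1)
    (h : ((Fin (H + 1) → S) × (Fin H → A)) → ℝ)
    (hprefix : ∀ τ τ' : (Fin (H + 1) → S) × (Fin H → A),
      (∀ j : Fin (H + 1), j.val ≤ i.val → τ.1 j = τ'.1 j) →
      (∀ j : Fin H, j.val < i.val → τ.2 j = τ'.2 j) → h τ = h τ')
    (θ : EuclideanSpace ℝ (Fin d)) :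
    ∑ τ : (Fin (H + 1) → S) × (Fin H → A),
      (trajProb ρ P π θ τ * h τ) •
        gradient (fun θ' => Real.log (π θ' (τ.1 i.castSucc) (τ.2 i))) θ = 0 := by
  rcases isEmpty_or_nonempty ((Fin (H + 1) → S) × (Fin H → A)) with _ | ⟨⟨states, actions⟩⟩
  · simp
  have : Nonempty S := ⟨states 0⟩
  have : Nonempty A := ⟨actions i⟩
  have hscore (s : S) : ∑ a, π θ s a • gradient (fun θ' => Real.log (π θ' s a)) θ = 0 :=
    sum_smul_gradient_log_eq_zero (fun a => (hdiff s a).differentiableAt)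
      (fun a => (hpos θ s a).ne') (fun θ' => hsum θ' s)
  exact sum_trajProb_mul_smul_eq_zero ρ P π θ hPsum (hsum θ) hscore i h
    fun τ τ' hττ' => hprefix τ τ' hττ'.1 hττ'.2

/-- **Causality lemma.** The score `∇_θ log π(aᵢ|sᵢ)` of the action at step `i` is
uncorrelated with any function `h` of the trajectory prefix `(s₀,a₀,…,a_{i-1},sᵢ)`:
`∑_τ f(θ,τ) · h(τ) • ∇_θ log π(θ,sᵢ,aᵢ) = 0`. -/
theorem stmt_5 {S A : Type*} [Fintype S] [Fintype A] {H d : ℕ}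
    (hH : 0 < H) (hd : 0 < d) (i : Fin H)
    (ρ : S → ℝ) (hρ : ∀ s, 0 ≤ ρ s)
    (P : S → S → A → ℝ) (hPnonneg : ∀ s' s a, 0 ≤ P s' s a)
    (hPsum : ∀ (s : S) (a : A), ∑ s' : S, P s' s a = 1)
    (π : EuclideanSpace ℝ (Fin d) → S → A → ℝ)
    (hdiff : ∀ (s : S) (a : A), Differentiable ℝ (fun θ => π θ s a))
    (hpos : ∀ (θ : EuclideanSpace ℝ (Fin d)) (s : S) (a : A), 0 < π θ s a)
    (hsum : ∀ (θ : EuclideanSpace ℝ (Fin d)) (s : S), ∑ a : A, π θ s a = 1)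
    (h : ((Fin (H + 1) → S) × (Fin H → A)) → ℝ)
    (hprefix : ∀ τ τ' : (Fin (H + 1) → S) × (Fin H → A),
      (∀ j : Fin (H + 1), j.val ≤ i.val → τ.1 j = τ'.1 j) →
      (∀ j : Fin H, j.val < i.val → τ.2 j = τ'.2 j) → h τ = h τ')
    (θ : EuclideanSpace ℝ (Fin d)) :
    ∑ τ : (Fin (H + 1) → S) × (Fin H → A),
      (trajProb ρ P π θ τ * h τ) •
        gradient (fun θ' => Real.log (π θ' (τ.1 i.castSucc) (τ.2 i))) θ = 0 :=
  stmt_5_general i ρ P hPsum π hdiff hpos hsum h hprefix θ
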